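/- arXiv:2109.12156 — 2 statements merged into one kernel-verified Lean document; each statement's English description precedes it below -/
import Mathlib

section
/- If Y is a real-valued random variable whose conditional CDF given X = x, namely F(·|x), is continuous in y for every x, then the random variable U = F(Y|X) is uniformly distributed on (0,1) and is independent of X. -/
/-!
Disintegrate the law of `(X, Y)` along `X`. The identity `hcond` forces the conditional kernel
to have cumulative distribution function `F x` for almost every `x`: first at each rational
point, then everywhere by right-continuity. For a single continuous distribution function `G`,
each sublevel set `{G ≤ u}` is a half-line `Iic y₀` with `G y₀ = u`, so `G` pushes its own
measure to the uniform law. Hence `(X, U)` has law `law(X) ⊗ uniform`, which gives both claims.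
-/

open MeasureTheory ProbabilityTheory Set Filter
open scoped ENNReal Topology

theorem StieltjesFunction.eq_of_forall_rat {f g : StieltjesFunction ℝ}
    (h : ∀ q : ℚ, f q = g q) : f = g := by
  ext x
  rw [← f.iInf_rat_gt_eq, ← g.iInf_rat_gt_eq]
  simp only [h]

theorem Real.volume_restrict_Ioo_Iic (u : ℝ) :
    volume.restrict (Ioo (0 : ℝ) 1) (Iic u) = ENNReal.ofReal (min u 1) := by
  have hae : (Iic u ∩ Ioo 0 1 : Set ℝ) =ᵐ[volume] (Iio u ∩ Ioo 0 1 : Set ℝ) :=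
    Iio_ae_eq_Iic.symm.inter (ae_eq_refl _)
  rw [Measure.restrict_apply measurableSet_Iic, measure_congr hae, Iio_inter_Ioo, Real.volume_Ioo,
    sub_zero]

section ContinuousCDF

variable {H : ℝ → ℝ}

theorem exists_preimage_Iic_eq_Iic (hc : Continuous H) (hm : Monotone H) {u : ℝ}
    (hne : (H ⁻¹' Iic u).Nonempty) (hbdd : BddAbove (H ⁻¹' Iic u)) :
    ∃ y₀, H ⁻¹' Iic u = Iic y₀ ∧ H y₀ = u := by
  set y₀ := sSup (H ⁻¹' Iic u)
  have hy₀ : H y₀ ≤ u := (isClosed_Iic.preimage hc).csSup_mem hne hbdd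
  refine ⟨y₀, Subset.antisymm (fun y hy => le_csSup hbdd hy) fun y hy => (hm hy).trans hy₀,
    le_antisymm hy₀ ?_⟩
  have hgt : ∀ y ∈ Ioi y₀, u ≤ H y := fun y hy => le_of_lt <| not_le.1 fun h =>
    (not_le.2 hy) (le_csSup hbdd h)
  exact ge_of_tendsto (hc.continuousWithinAt (s := Ioi y₀) (x := y₀))
    (eventually_nhdsWithin_of_forall hgt)

variable {ν : Measure ℝ} [IsProbabilityMeasure ν]

theorem measure_Iic_eq_ofReal_of_forall_rat (hc : Continuous H) (hm : Monotone H)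
    (h : ∀ q : ℚ, ν (Iic q) = ENNReal.ofReal (H q)) (y : ℝ) :
    ν (Iic y) = ENNReal.ofReal (H y) := by
  let G : StieltjesFunction ℝ :=
    { toFun := fun y => max (H y) 0
      mono' := fun _ _ hab => max_le_max (hm hab) le_rfl
      right_continuous' := fun _ => (hc.max continuous_const).continuousWithinAt }
  have hcdf : cdf ν = G := StieltjesFunction.eq_of_forall_rat fun q => by
    rw [cdf_eq_real, measureReal_def, h q, ENNReal.toReal_ofReal']
  rw [← ofReal_cdf, hcdf]
  simp [G]

theorem map_eq_volume_restrict_Ioo_of_measure_Iic (hc : Continuous H) (hm : Monotone H)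
    (h : ∀ y, ν (Iic y) = ENNReal.ofReal (H y)) :
    ν.map H = volume.restrict (Ioo 0 1) := by
  have : IsProbabilityMeasure (ν.map H) := Measure.isProbabilityMeasure_map hc.aemeasurable
  have hbot : Tendsto (fun y => ENNReal.ofReal (H y)) atBot (𝓝 0) := by
    simp_rw [← h, ← ofReal_cdf]
    simpa using ENNReal.tendsto_ofReal (tendsto_cdf_atBot ν)
  have htop : Tendsto (fun y => ENNReal.ofReal (H y)) atTop (𝓝 1) := by
    simpa [← h] using tendsto_measure_Iic_atTop ν
  refine Measure.ext_of_Iic _ _ fun u => ?_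
  rw [Measure.map_apply hc.measurable measurableSet_Iic, Real.volume_restrict_Ioo_Iic]
  rcases (H ⁻¹' Iic u).eq_empty_or_nonempty with hempty | hne
  · have hu : ENNReal.ofReal u ≤ 0 := ge_of_tendsto' hbot fun y =>
      ENNReal.ofReal_le_ofReal (not_le.1 (eq_empty_iff_forall_notMem.1 hempty y)).le
    rw [hempty, measure_empty, eq_comm, ENNReal.ofReal_eq_zero]
    exact (min_le_left _ _).trans (ENNReal.ofReal_eq_zero.1 (nonpos_iff_eq_zero.1 hu))
  by_cases hbdd : BddAbove (H ⁻¹' Iic u)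
  · obtain ⟨y₀, hS, rfl⟩ := exists_preimage_Iic_eq_Iic hc hm hne hbdd
    have hle : H y₀ ≤ 1 := ENNReal.ofReal_le_one.1 (h y₀ ▸ prob_le_one)
    rw [hS, h, min_eq_left hle]
  · have hS : H ⁻¹' Iic u = univ := eq_univ_of_forall fun y => by
      obtain ⟨z, hz, hyz⟩ := not_bddAbove_iff.1 hbdd y
      exact (hm hyz.le).trans hz
    have hu : 1 ≤ ENNReal.ofReal u := le_of_tendsto' htop fun y =>
      ENNReal.ofReal_le_ofReal (hS.symm ▸ mem_univ y : y ∈ H ⁻¹' Iic u)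
    rw [hS, measure_univ, min_eq_right (ENNReal.one_le_ofReal.1 hu), ENNReal.ofReal_one]

end ContinuousCDF

theorem MeasureTheory.Measure.map_compProd_eq_prod {α β γ : Type*} [MeasurableSpace α]
    [MeasurableSpace β] [MeasurableSpace γ] {μ : Measure α} [SFinite μ] {κ : Kernel α β}
    [IsSFiniteKernel κ] {ν : Measure γ} [SFinite ν] {f : α → β → γ}
    (hf : Measurable (Function.uncurry f)) (h : ∀ᵐ x ∂μ, (κ x).map (f x) = ν) :
    (μ ⊗ₘ κ).map (fun p => (p.1, f p.1 p.2)) = μ.prod ν := by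
  ext s hs
  have hg : Measurable fun p : α × β => (p.1, f p.1 p.2) := measurable_fst.prodMk hf
  rw [map_apply hg hs, compProd_apply (hg hs), prod_apply hs]
  refine lintegral_congr_ae (h.mono fun x hx => ?_)
  dsimp only
  rw [← hx, map_apply hf.of_uncurry_left (measurable_prodMk_left hs)]
  rfl

theorem ae_condKernel_Iic_eq_ofReal {α : Type*} [MeasurableSpace α] {ρ : Measure (α × ℝ)}
    [IsFiniteMeasure ρ] {F : α → ℝ → ℝ} (hFmeas : Measurable (Function.uncurry F))
    (hFcont : ∀ x, Continuous (F x)) (hFmono : ∀ x, Monotone (F x))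
    (hρ : ∀ s, MeasurableSet s → ∀ y,
      ρ (s ×ˢ Iic y) = ∫⁻ x in s, ENNReal.ofReal (F x y) ∂ρ.fst) :
    ∀ᵐ x ∂ρ.fst, ∀ y, ρ.condKernel x (Iic y) = ENNReal.ofReal (F x y) := by
  have hy : ∀ y, ∀ᵐ x ∂ρ.fst, ρ.condKernel x (Iic y) = ENNReal.ofReal (F x y) := fun y =>
    ae_eq_of_forall_setLIntegral_eq_of_sigmaFinite
      (ρ.condKernel.measurable_coe measurableSet_Iic)
      (hFmeas.of_uncurry_right.ennreal_ofReal) fun s hs _ => by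
        rw [Measure.setLIntegral_condKernel_eq_measure_prod hs measurableSet_Iic, hρ s hs y]
  filter_upwards [ae_all_iff.2 fun q : ℚ => hy q] with x hx
  exact measure_Iic_eq_ofReal_of_forall_rat (hFcont x) (hFmono x) hx

/-- Probability integral transform. If `F x` is, for each `x`, the
conditional CDF of `Y` given `X = x` (expressed via the disintegration identity
`P(X ∈ s, Y ≤ y) = ∫_{x ∈ s} F x y d(law X)`), and `F x` is continuous in `y`,
then `U = F (X ω) (Y ω)` is uniformly distributed on `(0,1)` and independent of `X`. -/
theorem pit_uniform_and_independent
    {Ω : Type*} [MeasurableSpace Ω] (P : Measure Ω) [IsProbabilityMeasure P]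
    {α : Type*} [MeasurableSpace α]
    (X : Ω → α) (Y : Ω → ℝ) (hX : Measurable X) (hY : Measurable Y)
    (F : α → ℝ → ℝ)
    (hFmeas : Measurable (Function.uncurry F))
    (hFcont : ∀ x, Continuous (F x))
    (hFcdf : ∀ x, Monotone (F x))
    (hcond : ∀ (s : Set α), MeasurableSet s → ∀ y : ℝ,
      P {ω | X ω ∈ s ∧ Y ω ≤ y} = ∫⁻ x in s, ENNReal.ofReal (F x y) ∂(P.map X)) :
    Measure.map (fun ω => F (X ω) (Y ω)) P = volume.restrict (Ioo (0:ℝ) 1) ∧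
      IndepFun (fun ω => F (X ω) (Y ω)) X P := by
  set ρ := P.map fun ω => (X ω, Y ω)
  have hρfst : ρ.fst = P.map X := Measure.fst_map_prodMk hY
  have hU : Measurable fun ω => F (X ω) (Y ω) := hFmeas.comp (hX.prodMk hY)
  have hunif : ∀ᵐ x ∂ρ.fst, (ρ.condKernel x).map (F x) = volume.restrict (Ioo 0 1) := by
    refine (ae_condKernel_Iic_eq_ofReal hFmeas hFcont hFcdf fun s hs y => ?_).mono fun x hx =>
      map_eq_volume_restrict_Ioo_of_measure_Iic (hFcont x) (hFcdf x) hx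
    rw [hρfst, Measure.map_apply (hX.prodMk hY) (hs.prod measurableSet_Iic)]
    exact hcond s hs y
  have hjoint : P.map (fun ω => (X ω, F (X ω) (Y ω))) =
      (P.map X).prod (volume.restrict (Ioo (0:ℝ) 1)) := by
    rw [← hρfst, ← Measure.map_compProd_eq_prod hFmeas hunif, ρ.disintegrate]
    exact (Measure.map_map (measurable_fst.prodMk hFmeas) (hX.prodMk hY)).symm
  have hlaw : P.map (fun ω => F (X ω) (Y ω)) = volume.restrict (Ioo (0:ℝ) 1) := by
    have : IsProbabilityMeasure (P.map X) := Measure.isProbabilityMeasure_map hX.aemeasurable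
    rw [← Measure.snd_map_prodMk hX, hjoint, Measure.snd_prod]
  refine ⟨hlaw, IndepFun.symm ?_⟩
  rw [indepFun_iff_map_prod_eq_prod_map_map hX.aemeasurable hU.aemeasurable, hlaw]
  exact hjoint
end

section
/- If the bootstrap prediction interval endpoints are asymptotically equivalent in probability to the quantile-estimation interval endpoints (i.e., Ŷ_f + D̂*_{x_f}^{-1}(u) − F̂_{y|x_f}^{-1}(u) → 0 in probability for u = α/2 and u = 1−α/2), and the true conditional CDF F_{y|x_f} is continuous and sup-norm consistently estimated by F̂_{y|x_f}, then the conditional coverage of the model-free bootstrap interval converges in probability to 1−α. -/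
open MeasureTheory Filter Set

/-! The quantiles of `F̂ₙ` converge in probability to those of `F`: on the event
`sup |F̂ₙ - F| < δ` the empirical quantile is trapped in any prescribed neighbourhood of the
true one, because `F` is strictly increasing. The MFB endpoints then converge to the same
quantiles, and continuity of `F` carries this over to `F(Lₙ) → α/2` and `F(Uₙ) → 1 - α/2`. -/

noncomputable def quantile (G : ℝ → ℝ) (u : ℝ) : ℝ := sInf {y | u ≤ G y}

theorem quantile_mem_Icc_of_abs_sub_lt {F G : ℝ → ℝ} (hF : Monotone F) {u a b δ : ℝ}
    (ha : F a ≤ u - δ) (hb : u + δ ≤ F b) (hG : ∀ y, |G y - F y| < δ) :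
    quantile G u ∈ Icc a b := by
  have hb_mem : b ∈ {y | u ≤ G y} := by
    have := (abs_lt.mp (hG b)).1
    simp only [mem_ofPred_eq]
    linarith
  have ha_lower : a ∈ lowerBounds {y | u ≤ G y} := by
    intro y hy
    by_contra! hya
    have := (abs_lt.mp (hG y)).2
    have := hF hya.le
    simp only [mem_ofPred_eq] at hy
    linarith
  exact ⟨le_csInf ⟨b, hb_mem⟩ ha_lower, csInf_le ⟨a, ha_lower⟩ hb_mem⟩

namespace MeasureTheory

variable {α ι : Type*} {m : MeasurableSpace α} {μ : Measure α} {l : Filter ι}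

theorem tendsto_measure_zero_of_subset {A B : ι → Set α} (hAB : ∀ i, A i ⊆ B i)
    (hB : Tendsto (fun i => μ (B i)) l (nhds 0)) : Tendsto (fun i => μ (A i)) l (nhds 0) :=
  tendsto_of_tendsto_of_tendsto_of_le_of_le tendsto_const_nhds hB (fun _ => zero_le)
    (fun i => measure_mono (hAB i))

theorem tendsto_measure_zero_of_subset_union {A B C : ι → Set α} (hABC : ∀ i, A i ⊆ B i ∪ C i)
    (hB : Tendsto (fun i => μ (B i)) l (nhds 0)) (hC : Tendsto (fun i => μ (C i)) l (nhds 0)) :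
    Tendsto (fun i => μ (A i)) l (nhds 0) := by
  refine tendsto_of_tendsto_of_tendsto_of_le_of_le tendsto_const_nhds
    (by simpa using hB.add hC) (fun _ => zero_le) (fun i => ?_)
  exact (measure_mono (hABC i)).trans (measure_union_le _ _)

theorem TendstoInMeasure.of_dist_le_add {E : Type*} [PseudoMetricSpace E]
    {f g h : ι → α → E} {a b c : α → E}
    (hle : ∀ i x, dist (h i x) (c x) ≤ dist (f i x) (a x) + dist (g i x) (b x))
    (hf : TendstoInMeasure μ f l a) (hg : TendstoInMeasure μ g l b) :
    TendstoInMeasure μ h l c := by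
  rw [tendstoInMeasure_iff_dist] at hf hg ⊢
  intro ε hε
  refine tendsto_measure_zero_of_subset_union (fun i x hx => ?_)
    (hf (ε / 2) (half_pos hε)) (hg (ε / 2) (half_pos hε))
  by_contra! hsmall
  simp only [mem_union, mem_ofPred_eq, not_or, not_le] at hx hsmall
  linarith [hle i x]

theorem TendstoInMeasure.add {E : Type*} [SeminormedAddCommGroup E]
    {f g : ι → α → E} {a b : α → E}
    (hf : TendstoInMeasure μ f l a) (hg : TendstoInMeasure μ g l b) :
    TendstoInMeasure μ (fun i x => f i x + g i x) l (fun x => a x + b x) :=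
  .of_dist_le_add (fun _ _ => dist_add_add_le _ _ _ _) hf hg

theorem TendstoInMeasure.sub {E : Type*} [SeminormedAddCommGroup E]
    {f g : ι → α → E} {a b : α → E}
    (hf : TendstoInMeasure μ f l a) (hg : TendstoInMeasure μ g l b) :
    TendstoInMeasure μ (fun i x => f i x - g i x) l (fun x => a x - b x) :=
  .of_dist_le_add (fun _ _ => dist_sub_sub_le _ _ _ _) hf hg

theorem TendstoInMeasure.comp_of_continuousAt {E E' : Type*} [PseudoMetricSpace E]
    [PseudoMetricSpace E'] {f : ι → α → E} {c : E} {φ : E → E'}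
    (hf : TendstoInMeasure μ f l (fun _ => c)) (hφ : ContinuousAt φ c) :
    TendstoInMeasure μ (fun i x => φ (f i x)) l (fun _ => φ c) := by
  rw [tendstoInMeasure_iff_dist] at hf ⊢
  intro ε hε
  obtain ⟨η, hη, hφη⟩ := Metric.continuousAt_iff.mp hφ ε hε
  refine tendsto_measure_zero_of_subset (fun i x hx => ?_) (hf η hη)
  rw [mem_ofPred_eq] at hx ⊢
  by_contra! hclose
  exact (hφη hclose).not_ge hx

theorem tendstoInMeasure_quantile {Fhat : ι → α → ℝ → ℝ} {F : ℝ → ℝ} (hF : StrictMono F)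
    (hsup : ∀ ε > (0 : ℝ), Tendsto (fun i => μ {x | ∃ y, ε ≤ |Fhat i x y - F y|}) l (nhds 0))
    {q : ℝ} : TendstoInMeasure μ (fun i x => quantile (Fhat i x) (F q)) l (fun _ => q) := by
  rw [tendstoInMeasure_iff_dist]
  intro η hη
  set δ := min (F q - F (q - η / 2)) (F (q + η / 2) - F q)
  have hδ : 0 < δ := lt_min (sub_pos.mpr (hF (by linarith))) (sub_pos.mpr (hF (by linarith)))
  have hlo : F (q - η / 2) ≤ F q - δ := by
    linarith [min_le_left (F q - F (q - η / 2)) (F (q + η / 2) - F q)]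
  have hhi : F q + δ ≤ F (q + η / 2) := by
    linarith [min_le_right (F q - F (q - η / 2)) (F (q + η / 2) - F q)]
  refine tendsto_measure_zero_of_subset (fun i x hx => ?_) (hsup δ hδ)
  rw [mem_ofPred_eq, Real.dist_eq] at hx
  rw [mem_ofPred_eq]
  by_contra! hclose
  obtain ⟨hq_lo, hq_hi⟩ := quantile_mem_Icc_of_abs_sub_lt hF.monotone hlo hhi hclose
  have : |quantile (Fhat i x) (F q) - q| ≤ η / 2 := abs_le.mpr ⟨by linarith, by linarith⟩
  linarith

theorem tendstoInMeasure_comp_of_sub_quantile {Fhat : ι → α → ℝ → ℝ} {F : ℝ → ℝ}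
    (hF_cont : Continuous F) (hF_mono : StrictMono F)
    (hF_bot : Tendsto F atBot (nhds 0)) (hF_top : Tendsto F atTop (nhds 1))
    (hsup : ∀ ε > (0 : ℝ), Tendsto (fun i => μ {x | ∃ y, ε ≤ |Fhat i x y - F y|}) l (nhds 0))
    {u : ℝ} (hu : u ∈ Ioo (0 : ℝ) 1) {G : ι → α → ℝ}
    (hG : TendstoInMeasure μ (fun i x => G i x - quantile (Fhat i x) u) l (fun _ => 0)) :
    TendstoInMeasure μ (fun i x => F (G i x)) l (fun _ => u) := by
  obtain ⟨q, rfl⟩ : u ∈ range F := mem_range_of_exists_le_of_exists_ge hF_cont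
    ((hF_bot.eventually (ge_mem_nhds hu.1)).exists) ((hF_top.eventually (le_mem_nhds hu.2)).exists)
  have hGq := hG.add (tendstoInMeasure_quantile hF_mono hsup (q := q))
  simp only [sub_add_cancel, zero_add] at hGq
  exact hGq.comp_of_continuousAt hF_cont.continuousAt

end MeasureTheory

theorem mfb_asymptotic_conditional_validity_general
    {Ω : Type*} [MeasurableSpace Ω] (μ : Measure Ω)
    (Fhat : ℕ → Ω → ℝ → ℝ) (F : ℝ → ℝ)
    (hF_cont : Continuous F) (hF_mono : StrictMono F)
    (hF_bot : Tendsto F atBot (nhds 0)) (hF_top : Tendsto F atTop (nhds 1))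
    (hsup : ∀ ε > (0:ℝ), Tendsto
      (fun n => μ {ω | ∃ y, ε ≤ |Fhat n ω y - F y|}) atTop (nhds 0))
    (α : ℝ) (hα : α ∈ Ioo (0:ℝ) 1)
    (L U : ℕ → Ω → ℝ)   -- MFB interval endpoints `Ŷ_f + D̂*⁻¹(u)`
    (hL : TendstoInMeasure μ
      (fun n ω => L n ω - sInf {y | α / 2 ≤ Fhat n ω y}) atTop (fun _ => 0))
    (hU : TendstoInMeasure μ
      (fun n ω => U n ω - sInf {y | 1 - α / 2 ≤ Fhat n ω y}) atTop (fun _ => 0)) :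
    TendstoInMeasure μ (fun n ω => F (U n ω) - F (L n ω)) atTop (fun _ => 1 - α) := by
  obtain ⟨hα0, hα1⟩ := hα
  have hFL : TendstoInMeasure μ (fun n ω => F (L n ω)) atTop (fun _ => α / 2) :=
    tendstoInMeasure_comp_of_sub_quantile hF_cont hF_mono hF_bot hF_top hsup
      ⟨by linarith, by linarith⟩ hL
  have hFU : TendstoInMeasure μ (fun n ω => F (U n ω)) atTop (fun _ => 1 - α / 2) :=
    tendstoInMeasure_comp_of_sub_quantile hF_cont hF_mono hF_bot hF_top hsup
      ⟨by linarith, by linarith⟩ hU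
  convert hFU.sub hFL using 2
  ring

/-- Asymptotic conditional validity of the model-free bootstrap
interval. If the MFB interval endpoints `Lₙ = Ŷ_f + D̂*⁻¹(α/2)` and
`Uₙ = Ŷ_f + D̂*⁻¹(1-α/2)` are asymptotically equivalent in probability to the
quantile-estimation endpoints `F̂ₙ⁻¹(α/2)`, `F̂ₙ⁻¹(1-α/2)`, and the estimated
conditional CDFs `F̂ₙ` are sup-norm consistent (in probability) for the continuous
strictly increasing true conditional CDF `F`, then the conditional coverage
`F(Uₙ) - F(Lₙ)` of the MFB interval converges in probability to `1-α`. -/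
theorem mfb_asymptotic_conditional_validity
    {Ω : Type*} [MeasurableSpace Ω] (μ : Measure Ω) [IsProbabilityMeasure μ]
    (Fhat : ℕ → Ω → ℝ → ℝ) (F : ℝ → ℝ)
    (hF_cont : Continuous F) (hF_mono : StrictMono F)
    (hF_bot : Tendsto F atBot (nhds 0)) (hF_top : Tendsto F atTop (nhds 1))
    (hFhat_cdf : ∀ n ω, Monotone (Fhat n ω))
    (hsup : ∀ ε > (0:ℝ), Tendsto
      (fun n => μ {ω | ∃ y, ε ≤ |Fhat n ω y - F y|}) atTop (nhds 0))
    (α : ℝ) (hα : α ∈ Ioo (0:ℝ) 1)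
    (L U : ℕ → Ω → ℝ)   -- MFB interval endpoints `Ŷ_f + D̂*⁻¹(u)`
    (hL : TendstoInMeasure μ
      (fun n ω => L n ω - sInf {y | α / 2 ≤ Fhat n ω y}) atTop (fun _ => 0))
    (hU : TendstoInMeasure μ
      (fun n ω => U n ω - sInf {y | 1 - α / 2 ≤ Fhat n ω y}) atTop (fun _ => 0)) :
    TendstoInMeasure μ (fun n ω => F (U n ω) - F (L n ω)) atTop (fun _ => 1 - α) :=
  mfb_asymptotic_conditional_validity_general μ Fhat F hF_cont hF_mono hF_bot hF_top hsup α hα L U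
    hL hU
end
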